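/- Suppose k·α ≤ 1 and let λ > 0 be a constant. Then lim sup_{n→∞} ∑_{S=0}^{⌊n·η₁(n)⌋} Φ_n(S) ≤ exp(k·λ·p·r/(1−p)). -/

import Mathlib

/-!
On the range `S ≤ n η₁` we have `S / n ≤ η₁`, so by monotonicity of `f_n` every weight `W_n(S)` is
at most `f_n(η₁)^{r m}`, while the binomial weights `B_n(S)` sum to at most `1`. Hence the sum is at
most `f_n(η₁)^{r m} ≤ exp (r m (f_n(η₁) - 1))`. Writing `η₁ = (1 + t) / d` with
`t = λ n^{kα - 1} / ln d`, one has `m t = λ d^k`, so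
`m (f_n(η₁) - 1) = (p / (1 - p)) λ ((1 + t)^k - 1) / (t (1 - d^{-k}))`. Since `kα ≤ 1`, `t → 0`, and
the difference quotient tends to the derivative `k` of `x ↦ x^k` at `1`.
-/

open Filter Finset Topology

/-- Domain size `d = n^α` of Model RB. -/
noncomputable def dRB (α : ℝ) (n : ℕ) : ℝ := (n : ℝ) ^ α

/-- `m = n · ln d`. -/
noncomputable def mRB (α : ℝ) (n : ℕ) : ℝ := (n : ℝ) * Real.log (dRB α n)

/-- `f_n(s) = 1 + (p/(1-p)) (s^k - d^{-k})/(1 - d^{-k})`. -/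
noncomputable def fRB (α p : ℝ) (k n : ℕ) (s : ℝ) : ℝ :=
  1 + (p / (1 - p)) * (s ^ k - dRB α n ^ (-(k : ℝ))) / (1 - dRB α n ^ (-(k : ℝ)))

/-- `B_n(S) = C(n,S) (1/d)^S (1-1/d)^{n-S}`. -/
noncomputable def BRB (α : ℝ) (n S : ℕ) : ℝ :=
  (n.choose S : ℝ) * (1 / dRB α n) ^ S * (1 - 1 / dRB α n) ^ (n - S)

/-- `W_n(S) = f_n(S/n)^{r m}`. -/
noncomputable def WRB (α p r : ℝ) (k n S : ℕ) : ℝ :=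
  fRB α p k n ((S : ℝ) / (n : ℝ)) ^ (r * mRB α n)

/-- `Φ_n(S) = B_n(S) W_n(S)`. -/
noncomputable def PhiRB (α p r : ℝ) (k n S : ℕ) : ℝ := BRB α n S * WRB α p r k n S

/-- `g(s) = -k(k-1)(1-s)s^{k-1}/2`. -/
noncomputable def gRB (k : ℕ) (s : ℝ) : ℝ :=
  -((k : ℝ) * ((k : ℝ) - 1)) * (1 - s) * s ^ (k - 1) / 2

/-- `η₁(n) = 1/d + λ/(n^{1-(k-1)α} ln d)`. -/
noncomputable def eta1 (α lam : ℝ) (k n : ℕ) : ℝ :=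
  1 / dRB α n + lam / ((n : ℝ) ^ (1 - ((k : ℝ) - 1) * α) * Real.log (dRB α n))

/-- First moment `E[X] = d^n (1-p)^{r m}`. -/
noncomputable def E1RB (α p r : ℝ) (n : ℕ) : ℝ := dRB α n ^ n * (1 - p) ^ (r * mRB α n)

/-- Second moment `E[X²]`. -/
noncomputable def E2RB (α p r : ℝ) (k n : ℕ) : ℝ :=
  ∑ S ∈ Finset.range (n + 1),
    dRB α n ^ n * (n.choose S : ℝ) * (dRB α n - 1) ^ (n - S) *
      ((1 - p) * ((S.choose k : ℝ) / (n.choose k : ℝ)) +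
        ((1 - p) ^ 2 - p * (1 - p) * dRB α n ^ (-(k : ℝ)) / (1 - dRB α n ^ (-(k : ℝ)))) *
          (1 - (S.choose k : ℝ) / (n.choose k : ℝ))) ^ (r * mRB α n)


theorem tendsto_one_add_pow_sub_one_div (k : ℕ) :
    Tendsto (fun t : ℝ => ((1 + t) ^ k - 1) / t) (𝓝[≠] 0) (𝓝 (k : ℝ)) := by
  have h := hasDerivAt_iff_tendsto_slope_zero.mp (by simpa using hasDerivAt_pow k (1 : ℝ))
  simpa [div_eq_inv_mul] using h

theorem Real.rpow_le_exp_mul_sub_one {x y : ℝ} (hx : 0 ≤ x) (hy : 0 ≤ y) :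
    x ^ y ≤ Real.exp (y * (x - 1)) := by
  rw [mul_comm, Real.exp_mul]
  exact Real.rpow_le_rpow hx (by linarith [Real.add_one_le_exp (x - 1)]) hy

theorem sum_range_choose_mul_pow_le_one {q : ℝ} (hq0 : 0 ≤ q) (hq1 : q ≤ 1) (n M : ℕ) :
    ∑ S ∈ range M, (n.choose S : ℝ) * q ^ S * (1 - q) ^ (n - S) ≤ 1 := by
  have hterm : ∀ S, 0 ≤ (n.choose S : ℝ) * q ^ S * (1 - q) ^ (n - S) := fun S => by
    have := sub_nonneg.2 hq1
    positivity
  calc ∑ S ∈ range M, (n.choose S : ℝ) * q ^ S * (1 - q) ^ (n - S)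
      ≤ ∑ S ∈ range (max M (n + 1)), (n.choose S : ℝ) * q ^ S * (1 - q) ^ (n - S) :=
        sum_le_sum_of_subset_of_nonneg (range_subset_range.2 (le_max_left _ _))
          fun S _ _ => hterm S
    _ = ∑ S ∈ range (n + 1), (n.choose S : ℝ) * q ^ S * (1 - q) ^ (n - S) := by
        refine (sum_subset (range_subset_range.2 (le_max_right _ _)) fun S _ hS => ?_).symm
        rw [Nat.choose_eq_zero_of_lt (by simpa using hS), Nat.cast_zero, zero_mul, zero_mul]
    _ = (q + (1 - q)) ^ n := by
        rw [add_pow]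
        exact sum_congr rfl fun S _ => by ring
    _ = 1 := by rw [add_sub_cancel, one_pow]

section Weights

variable {α p r : ℝ} {k n : ℕ}

theorem BRB_nonneg (hd : 1 ≤ dRB α n) (S : ℕ) : 0 ≤ BRB α n S := by
  have : 1 / dRB α n ≤ 1 := div_le_one_of_le₀ hd (by linarith)
  unfold BRB
  have := sub_nonneg.2 this
  positivity

theorem sum_range_BRB_le_one (hd : 1 ≤ dRB α n) (M : ℕ) : ∑ S ∈ range M, BRB α n S ≤ 1 :=
  sum_range_choose_mul_pow_le_one (by positivity) (div_le_one_of_le₀ hd (by linarith)) n M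

theorem dRB_rpow_nonneg (x : ℝ) : 0 ≤ dRB α n ^ x :=
  Real.rpow_nonneg (Real.rpow_nonneg n.cast_nonneg α) x

theorem fRB_le_fRB (hp0 : 0 ≤ p) (hδ : dRB α n ^ (-(k : ℝ)) < 1 - p) {s t : ℝ}
    (hs : 0 ≤ s) (hst : s ≤ t) : fRB α p k n s ≤ fRB α p k n t := by
  have := dRB_rpow_nonneg (α := α) (n := n) (-(k : ℝ))
  have : 0 ≤ p / (1 - p) := div_nonneg hp0 (by linarith)
  have : 0 < 1 - dRB α n ^ (-(k : ℝ)) := by linarith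
  unfold fRB
  gcongr

theorem fRB_nonneg (hp0 : 0 ≤ p) (hδ : dRB α n ^ (-(k : ℝ)) < 1 - p) {s : ℝ}
    (hs : 0 ≤ s) : 0 ≤ fRB α p k n s := by
  have hδ0 := dRB_rpow_nonneg (α := α) (n := n) (-(k : ℝ))
  set δ := dRB α n ^ (-(k : ℝ))
  have hp' : 0 < 1 - p := by linarith
  have hδ1 : 0 < 1 - δ := by linarith
  have hcδ : p / (1 - p) * δ ≤ 1 - δ := by
    rw [div_mul_eq_mul_div, div_le_iff₀ hp']
    nlinarith
  calc 0 ≤ 1 + p / (1 - p) * (0 - δ) / (1 - δ) := by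
        rw [zero_sub, mul_neg, neg_div, ← sub_eq_add_neg, sub_nonneg, div_le_one hδ1]
        exact hcδ
    _ ≤ fRB α p k n s := by
        unfold fRB
        gcongr
        positivity

theorem mRB_nonneg (hd : 1 ≤ dRB α n) : 0 ≤ mRB α n :=
  mul_nonneg n.cast_nonneg (Real.log_nonneg hd)

theorem PhiRB_nonneg (hp0 : 0 ≤ p) (hd : 1 ≤ dRB α n) (hδ : dRB α n ^ (-(k : ℝ)) < 1 - p)
    (S : ℕ) : 0 ≤ PhiRB α p r k n S :=
  mul_nonneg (BRB_nonneg hd S) (Real.rpow_nonneg (fRB_nonneg hp0 hδ (by positivity)) _)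

theorem sum_PhiRB_le (hp0 : 0 ≤ p) (hr : 0 ≤ r) (hd : 1 ≤ dRB α n)
    (hδ : dRB α n ^ (-(k : ℝ)) < 1 - p) {s : ℝ} (hs : 0 ≤ s) :
    ∑ S ∈ range (⌊(n : ℝ) * s⌋₊ + 1), PhiRB α p r k n S ≤ fRB α p k n s ^ (r * mRB α n) := by
  have hW : ∀ S ∈ range (⌊(n : ℝ) * s⌋₊ + 1), WRB α p r k n S ≤ fRB α p k n s ^ (r * mRB α n) := by
    intro S hS
    have hSn : (S : ℝ) / n ≤ s := by
      refine div_le_of_le_mul₀ n.cast_nonneg hs ?_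
      rw [mul_comm]
      exact (Nat.cast_le.2 (Nat.lt_succ_iff.1 (mem_range.1 hS))).trans
        (Nat.floor_le (by positivity))
    exact Real.rpow_le_rpow (fRB_nonneg hp0 hδ (by positivity))
      (fRB_le_fRB hp0 hδ (by positivity) hSn)
      (mul_nonneg hr (mRB_nonneg hd))
  calc ∑ S ∈ range (⌊(n : ℝ) * s⌋₊ + 1), PhiRB α p r k n S
      ≤ ∑ S ∈ range (⌊(n : ℝ) * s⌋₊ + 1), BRB α n S * fRB α p k n s ^ (r * mRB α n) :=
        sum_le_sum fun S hS => mul_le_mul_of_nonneg_left (hW S hS) (BRB_nonneg hd S)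
    _ ≤ 1 * fRB α p k n s ^ (r * mRB α n) := by
        rw [← sum_mul]
        exact mul_le_mul_of_nonneg_right (sum_range_BRB_le_one hd _)
          (Real.rpow_nonneg (fRB_nonneg hp0 hδ hs) _)
    _ = fRB α p k n s ^ (r * mRB α n) := one_mul _

end Weights

section Asymptotics

variable {α lam : ℝ} {k n : ℕ}

theorem one_lt_dRB (hα : 0 < α) (hn : 2 ≤ n) : 1 < dRB α n :=
  Real.one_lt_rpow (Nat.one_lt_cast.2 hn) hα

theorem tendsto_dRB_atTop (hα : 0 < α) : Tendsto (dRB α) atTop atTop :=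
  (tendsto_rpow_atTop hα).comp tendsto_natCast_atTop_atTop

theorem tendsto_dRB_rpow_neg (hα : 0 < α) (hk : 0 < k) :
    Tendsto (fun n => dRB α n ^ (-(k : ℝ))) atTop (𝓝 0) :=
  (tendsto_rpow_neg_atTop (by exact_mod_cast hk)).comp (tendsto_dRB_atTop hα)

noncomputable def tRB (α lam : ℝ) (k n : ℕ) : ℝ :=
  lam * (n : ℝ) ^ ((k : ℝ) * α - 1) / Real.log (dRB α n)

theorem dRB_pow (k n : ℕ) : dRB α n ^ k = (n : ℝ) ^ ((k : ℝ) * α) := by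
  rw [dRB, ← Real.rpow_natCast, ← Real.rpow_mul n.cast_nonneg, mul_comm]

theorem eta1_eq_one_add_tRB_div (hα : 0 < α) (hn : 2 ≤ n) :
    eta1 α lam k n = (1 + tRB α lam k n) / dRB α n := by
  have hn0 : (0 : ℝ) < n := by norm_cast; omega
  have hsplit : dRB α n = (n : ℝ) ^ (1 - ((k : ℝ) - 1) * α) * (n : ℝ) ^ ((k : ℝ) * α - 1) := by
    rw [← Real.rpow_add hn0, dRB]
    ring_nf
  have := (Real.log_pos (one_lt_dRB hα hn)).ne'
  rw [eta1, tRB, add_div, hsplit]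
  field_simp

theorem mRB_mul_tRB (hα : 0 < α) (hn : 2 ≤ n) :
    mRB α n * tRB α lam k n = lam * dRB α n ^ k := by
  have hn0 : (0 : ℝ) < n := by norm_cast; omega
  have := (Real.log_pos (one_lt_dRB hα hn)).ne'
  have hnn : (n : ℝ) ^ (1 : ℝ) * (n : ℝ) ^ ((k : ℝ) * α - 1) = (n : ℝ) ^ ((k : ℝ) * α) := by
    rw [← Real.rpow_add hn0, add_sub_cancel]
  rw [mRB, tRB, dRB_pow]
  field_simp
  rw [Real.rpow_one] at hnn
  linear_combination lam * hnn

theorem tRB_pos (hα : 0 < α) (hlam : 0 < lam) (hn : 2 ≤ n) : 0 < tRB α lam k n :=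
  div_pos (mul_pos hlam (Real.rpow_pos_of_pos (by norm_cast; omega) _))
    (Real.log_pos (one_lt_dRB hα hn))

theorem tendsto_tRB_nhdsGT_zero (hα : 0 < α) (hlam : 0 < lam) (hkα : (k : ℝ) * α ≤ 1) :
    Tendsto (tRB α lam k) atTop (𝓝[>] 0) := by
  have hpos : ∀ᶠ n in atTop, 0 < tRB α lam k n :=
    eventually_atTop.2 ⟨2, fun n hn => tRB_pos hα hlam hn⟩
  refine tendsto_nhdsWithin_of_tendsto_nhds_of_eventually_within _ ?_ hpos
  refine squeeze_zero' (g := fun n => lam / Real.log (dRB α n)) (hpos.mono fun n h => h.le) ?_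
    (tendsto_const_nhds.div_atTop (Real.tendsto_log_atTop.comp (tendsto_dRB_atTop hα)))
  filter_upwards [eventually_ge_atTop 2] with n hn
  have := Real.log_pos (one_lt_dRB hα hn)
  have : (n : ℝ) ^ ((k : ℝ) * α - 1) ≤ 1 :=
    Real.rpow_le_one_of_one_le_of_nonpos (by norm_cast; omega) (by linarith)
  rw [tRB]
  gcongr
  exact mul_le_of_le_one_right hlam.le this

theorem mRB_mul_eta1_pow_sub (hα : 0 < α) (hlam : 0 < lam) (hn : 2 ≤ n) :
    mRB α n * (eta1 α lam k n ^ k - dRB α n ^ (-(k : ℝ)))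
      = lam * (((1 + tRB α lam k n) ^ k - 1) / tRB α lam k n) := by
  have := (tRB_pos (k := k) hα hlam hn).ne'
  have := (zero_lt_one.trans (one_lt_dRB hα hn)).ne'
  have hmt := mRB_mul_tRB (lam := lam) (k := k) hα hn
  rw [eta1_eq_one_add_tRB_div hα hn, Real.rpow_neg (zero_le_one.trans (one_lt_dRB hα hn).le),
    Real.rpow_natCast, div_pow]
  field_simp
  linear_combination ((1 + tRB α lam k n) ^ k - 1) * hmt

theorem tendsto_mRB_mul_fRB_eta1_sub_one (p : ℝ) (hα : 0 < α) (hk : 0 < k) (hlam : 0 < lam)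
    (hkα : (k : ℝ) * α ≤ 1) :
    Tendsto (fun n => mRB α n * (fRB α p k n (eta1 α lam k n) - 1)) atTop
      (𝓝 (p / (1 - p) * (lam * k))) := by
  have ht : Tendsto (tRB α lam k) atTop (𝓝[≠] 0) :=
    (tendsto_tRB_nhdsGT_zero hα hlam hkα).mono_right (nhdsWithin_mono _ fun _ h => ne_of_gt h)
  have hquot := ((tendsto_one_add_pow_sub_one_div k).comp ht).const_mul lam
  have h := (hquot.const_mul (p / (1 - p))).div ((tendsto_dRB_rpow_neg hα hk).const_sub 1)
    (by norm_num)
  rw [sub_zero, div_one] at h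
  refine h.congr' ?_
  filter_upwards [eventually_ge_atTop 2] with n hn
  simp only [Pi.div_apply, Function.comp_apply]
  rw [fRB, add_sub_cancel_left, ← mRB_mul_eta1_pow_sub hα hlam hn]
  ring

end Asymptotics

theorem stmt5_general (α p r lam : ℝ) (k : ℕ) (hα : 0 < α) (hk : 2 ≤ k)
    (hp0 : 0 < p) (hp1 : p < 1) (hr0 : 0 < r)
    (hkα : (k : ℝ) * α ≤ 1) (hlam : 0 < lam) :
    Filter.limsup
      (fun n : ℕ => ∑ S ∈ Finset.range (⌊(n : ℝ) * eta1 α lam k n⌋₊ + 1), PhiRB α p r k n S)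
      Filter.atTop ≤ Real.exp ((k : ℝ) * lam * p * r / (1 - p)) := by
  have hlim : Tendsto (fun n : ℕ => Real.exp (r * mRB α n * (fRB α p k n (eta1 α lam k n) - 1)))
      atTop (𝓝 (Real.exp (r * (p / (1 - p) * (lam * k))))) := by
    simp only [mul_assoc r]
    exact (Real.continuous_exp.tendsto _).comp
      ((tendsto_mRB_mul_fRB_eta1_sub_one p hα (by omega) hlam hkα).const_mul r)
  have hbounds : ∀ᶠ n : ℕ in atTop,
      0 ≤ ∑ S ∈ range (⌊(n : ℝ) * eta1 α lam k n⌋₊ + 1), PhiRB α p r k n S ∧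
      ∑ S ∈ range (⌊(n : ℝ) * eta1 α lam k n⌋₊ + 1), PhiRB α p r k n S
        ≤ Real.exp (r * mRB α n * (fRB α p k n (eta1 α lam k n) - 1)) := by
    filter_upwards [eventually_ge_atTop 2,
      (tendsto_dRB_rpow_neg (k := k) hα (by omega)).eventually_lt_const (sub_pos.2 hp1)] with n hn hδ
    have hd := (one_lt_dRB hα hn).le
    have hη : 0 ≤ eta1 α lam k n := by
      rw [eta1_eq_one_add_tRB_div hα hn]
      have := tRB_pos (k := k) hα hlam hn
      positivity
    refine ⟨sum_nonneg fun S _ => PhiRB_nonneg hp0.le hd hδ S, ?_⟩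
    exact (sum_PhiRB_le hp0.le hr0.le hd hδ hη).trans (Real.rpow_le_exp_mul_sub_one
      (fRB_nonneg hp0.le hδ hη) (mul_nonneg hr0.le (mRB_nonneg hd)))
  calc limsup (fun n : ℕ => ∑ S ∈ range (⌊(n : ℝ) * eta1 α lam k n⌋₊ + 1), PhiRB α p r k n S) atTop
      ≤ limsup (fun n : ℕ => Real.exp (r * mRB α n * (fRB α p k n (eta1 α lam k n) - 1))) atTop :=
        limsup_le_limsup (hbounds.mono fun _ h => h.2)
          (isCoboundedUnder_le_of_eventually_le atTop (hbounds.mono fun _ h => h.1))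
          hlim.isBoundedUnder_le
    _ = Real.exp (r * (p / (1 - p) * (lam * k))) := hlim.limsup_eq
    _ = Real.exp ((k : ℝ) * lam * p * r / (1 - p)) := by ring_nf

/-- if kα ≤ 1 and λ > 0, then
limsup ∑_{S=0}^{⌊nη₁⌋} Φ_n(S) ≤ exp(kλpr/(1-p)). -/
theorem stmt5 (α p r τ lam : ℝ) (k : ℕ) (hα : 0 < α) (hk : 2 ≤ k)
    (hp0 : 0 < p) (hp1 : p < 1) (hτ : τ = 1 / (1 - p)) (hr0 : 0 < r)
    (hkα : (k : ℝ) * α ≤ 1) (hlam : 0 < lam) :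
    Filter.limsup
      (fun n : ℕ => ∑ S ∈ Finset.range (⌊(n : ℝ) * eta1 α lam k n⌋₊ + 1), PhiRB α p r k n S)
      Filter.atTop ≤ Real.exp ((k : ℝ) * lam * p * r / (1 - p)) :=
  stmt5_general α p r lam k hα hk hp0 hp1 hr0 hkα hlam
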